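/- The set C_bd (the minimal set of configurations in the essential gate G(□,⊞) through which all optimal paths from □ to ⊞ first enter G(□,⊞)) is a minimal gate for the transition □ → ⊞. -/

import Mathlib

noncomputable section

namespace TwoTypeKawasaki

/-- Lattice sites of `ℤ²`. -/
abbrev Site := ℤ × ℤ

/-- Nearest-neighbour adjacency in `ℤ²`. -/
def Adj (x y : Site) : Prop := |x.1 - y.1| + |x.2 - y.2| = 1

/-- The box `Λ`: an `(L+3/2) × (L+3/2)` square in dual coordinates
(`u₁ = (x₁-x₂)/2`, `u₂ = (x₁+x₂)/2`), i.e. a rhombus in standard coordinates. -/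
def inLam (L : ℕ) (x : Site) : Prop :=
  -((L : ℤ) + 1) ≤ x.1 - x.2 ∧ x.1 - x.2 ≤ (L : ℤ) + 2 ∧
    -((L : ℤ) + 1) ≤ x.1 + x.2 ∧ x.1 + x.2 ≤ (L : ℤ) + 2

/-- `Λ⁻ = Λ \ ∂⁻Λ`. -/
def inLam1 (L : ℕ) (x : Site) : Prop := inLam L x ∧ ∀ y, Adj x y → inLam L y

/-- `(Λ⁻)⁻`. -/
def inLam2 (L : ℕ) (x : Site) : Prop := inLam1 L x ∧ ∀ y, Adj x y → inLam1 L y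

/-- The internal boundary `∂⁻Λ`. -/
def inBd (L : ℕ) (x : Site) : Prop := inLam L x ∧ ¬ inLam1 L x

/-- Euclidean distance `> 2` from every site of `∂⁻Λ`. -/
def FarFromBd (L : ℕ) (x : Site) : Prop :=
  ∀ z : Site, inBd L z → 4 < (x.1 - z.1) ^ 2 + (x.2 - z.2) ^ 2

/-- A configuration: `0` = empty, `1` = particle of type 1, `2` = particle of type 2;
empty outside `Λ`. -/
def Config (L : ℕ) : Type := {η : Site → Fin 3 // ∀ x, ¬ inLam L x → η x = 0}

/-- An active bond: a nearest-neighbour pair of particles of different types, both sites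
at distance at least 3 from the internal boundary. -/
def activeBond (L : ℕ) (η : Config L) (x y : Site) : Prop :=
  Adj x y ∧ FarFromBd L x ∧ FarFromBd L y ∧
    ((η.1 x = 1 ∧ η.1 y = 2) ∨ (η.1 x = 2 ∧ η.1 y = 1))

/-- Number of particles of a given type. -/
def numType (L : ℕ) (η : Config L) (v : Fin 3) : ℕ := {x : Site | η.1 x = v}.ncard

def numParticles (L : ℕ) (η : Config L) : ℕ := numType L η 1 + numType L η 2

/-- Number of ordered pairs forming an active bond (twice the number of bonds). -/
def numBondPairs (L : ℕ) (η : Config L) : ℕ :=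
  {q : Site × Site | activeBond L η q.1 q.2}.ncard

/-- The Hamiltonian `H = -U·B + Δ₁·n₁ + Δ₂·n₂`. -/
def H (U Δ1 Δ2 : ℝ) (L : ℕ) (η : Config L) : ℝ :=
  -U * (numBondPairs L η : ℝ) / 2 + Δ1 * (numType L η 1 : ℝ) + Δ2 * (numType L η 2 : ℝ)

/-- An allowed move of the Kawasaki dynamics: exchange of a particle with a hole between
two neighbouring sites of `Λ`, or creation/annihilation of a particle in `∂⁻Λ`. -/
def Move (L : ℕ) (η η' : Config L) : Prop :=
  (∃ x y : Site, Adj x y ∧ inLam L x ∧ inLam L y ∧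
      ((η.1 x = 0 ∧ η.1 y ≠ 0) ∨ (η.1 x ≠ 0 ∧ η.1 y = 0)) ∧
      η'.1 x = η.1 y ∧ η'.1 y = η.1 x ∧ ∀ z, z ≠ x → z ≠ y → η'.1 z = η.1 z) ∨
  (∃ x : Site, inBd L x ∧
      ((η.1 x = 0 ∧ η'.1 x ≠ 0) ∨ (η.1 x ≠ 0 ∧ η'.1 x = 0)) ∧
      ∀ z, z ≠ x → η'.1 z = η.1 z)

/-- A path of allowed moves from `η` to `η'`. -/
def IsPath (L : ℕ) (ω : List (Config L)) (η η' : Config L) : Prop :=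
  ω ≠ [] ∧ ω.head? = some η ∧ ω.getLast? = some η' ∧ ω.Chain' (Move L)

/-- Maximal energy along a path. -/
def maxH (U Δ1 Δ2 : ℝ) (L : ℕ) (ω : List (Config L)) : ℝ :=
  WithBot.unbotD 0 ((ω.map (H U Δ1 Δ2 L)).maximum)

/-- Communication height between two sets of configurations. -/
def PhiSet (U Δ1 Δ2 : ℝ) (L : ℕ) (A B : Set (Config L)) : ℝ :=
  sInf {m : ℝ | ∃ η ∈ A, ∃ η' ∈ B, ∃ ω, IsPath L ω η η' ∧ maxH U Δ1 Δ2 L ω = m}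

/-- Communication height between two configurations. -/
def Phi (U Δ1 Δ2 : ℝ) (L : ℕ) (η η' : Config L) : ℝ := PhiSet U Δ1 Δ2 L {η} {η'}

/-- The empty configuration `□`. -/
def emptyConfig (L : ℕ) : Config L := ⟨fun _ => 0, fun _ _ => rfl⟩

/-- A particle of type 2 with four active bonds. -/
def Saturated (L : ℕ) (η : Config L) (x : Site) : Prop :=
  η.1 x = 2 ∧ ∀ y, Adj x y → activeBond L η x y

/-- A 2-tiled configuration: every particle of type 2 is saturated and there are no
non-interacting particles of type 1. -/
def Tiled (L : ℕ) (η : Config L) : Prop :=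
  (∀ x, η.1 x = 2 → Saturated L η x) ∧ (∀ x, η.1 x = 1 → ∃ y, activeBond L η x y)

/-- `⊞`: the configurations in which `Λ` carries the largest possible checkerboard
droplet with every particle of type 2 surrounded by particles of type 1. -/
def BoxPlus (L : ℕ) : Set (Config L) :=
  {η | Tiled L η ∧ ∀ η' : Config L, Tiled L η' → numType L η' 2 ≤ numType L η 2}

/-- `Γ* = Φ(□, ⊞)`. -/
def Gamma (U Δ1 Δ2 : ℝ) (L : ℕ) : ℝ := PhiSet U Δ1 Δ2 L {emptyConfig L} (BoxPlus L)

/-- An optimal path from `□` to `⊞`: one realizing the minimax `Γ*`. -/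
def OptPath (U Δ1 Δ2 : ℝ) (L : ℕ) (ω : List (Config L)) : Prop :=
  ∃ b ∈ BoxPlus L, IsPath L ω (emptyConfig L) b ∧ maxH U Δ1 Δ2 L ω = Gamma U Δ1 Δ2 L

/-- A saddle: a configuration at energy `Γ*` on some optimal path. -/
def Saddle (U Δ1 Δ2 : ℝ) (L : ℕ) (ζ : Config L) : Prop :=
  H U Δ1 Δ2 L ζ = Gamma U Δ1 Δ2 L ∧ ∃ ω, OptPath U Δ1 Δ2 L ω ∧ ζ ∈ ω

/-- A gate: a set of saddles met by every optimal path. -/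
def IsGate (U Δ1 Δ2 : ℝ) (L : ℕ) (W : Set (Config L)) : Prop :=
  (∀ ζ ∈ W, Saddle U Δ1 Δ2 L ζ) ∧ ∀ ω, OptPath U Δ1 Δ2 L ω → ∃ ζ ∈ W, ζ ∈ ω

/-- A minimal gate: a gate such that every proper subset is avoided by some optimal path. -/
def IsMinGate (U Δ1 Δ2 : ℝ) (L : ℕ) (W : Set (Config L)) : Prop :=
  IsGate U Δ1 Δ2 L W ∧
    ∀ W' : Set (Config L), W' ⊂ W → ∃ ω, OptPath U Δ1 Δ2 L ω ∧ ∀ ζ ∈ W', ζ ∉ ω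

/-- The essential gate `G(□,⊞)`: the union of all minimal gates. -/
def EssGate (U Δ1 Δ2 : ℝ) (L : ℕ) : Set (Config L) :=
  {ζ | ∃ W, IsMinGate U Δ1 Δ2 L W ∧ ζ ∈ W}

/-- `η` is the first configuration of the path `ω` lying in `Y`. -/
def FirstIn {C : Type*} (ω : List C) (Y : Set C) (η : C) : Prop :=
  ∃ (i : ℕ) (h : i < ω.length), ω.get ⟨i, h⟩ = η ∧ η ∈ Y ∧
    ∀ (j : ℕ) (hj : j < i), ω.get ⟨j, hj.trans h⟩ ∉ Y

/-- `η` is the configuration of `ω` visited just prior to the first entrance of `Y`. -/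
def PrevFirstIn {C : Type*} (ω : List C) (Y : Set C) (η : C) : Prop :=
  ∃ (i : ℕ) (h : i + 1 < ω.length), ω.get ⟨i, Nat.lt_of_succ_lt h⟩ = η ∧
    ω.get ⟨i + 1, h⟩ ∈ Y ∧
    ∀ (j : ℕ) (hj : j < i + 1), ω.get ⟨j, lt_trans hj h⟩ ∉ Y

/-- `ω` enters the set `Y` via the configuration `η` (at some entrance: `η ∈ Y` and the
configuration visited just before, if any, is not in `Y`). -/
def EntryAt {C : Type*} (ω : List C) (Y : Set C) (η : C) : Prop :=
  ∃ (i : ℕ) (h : i < ω.length), ω.get ⟨i, h⟩ = η ∧ η ∈ Y ∧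
    ∀ (j : ℕ) (hj : j + 1 = i), ω.get ⟨j, by omega⟩ ∉ Y

/-- `C_bd`: the minimal set of configurations in the essential gate through which all
optimal paths first enter the essential gate (= the set of first entrances). -/
def Cbd (U Δ1 Δ2 : ℝ) (L : ℕ) : Set (Config L) :=
  {η | ∃ ω, OptPath U Δ1 Δ2 L ω ∧ FirstIn ω (EssGate U Δ1 Δ2 L) η}

/-- `P`: the protocritical droplets, i.e. configurations visited by optimal paths just
prior to their first entrance of the essential gate. -/
def Pset (U Δ1 Δ2 : ℝ) (L : ℕ) : Set (Config L) :=
  {η | ∃ ω, OptPath U Δ1 Δ2 L ω ∧ PrevFirstIn ω (EssGate U Δ1 Δ2 L) η}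

open Classical in
/-- Change the value of a configuration at a site of `Λ`. -/
def setSite (L : ℕ) (η : Config L) (x : Site) (v : Fin 3) : Config L :=
  if hx : inLam L x then
    ⟨Function.update η.1 x v, fun z hz => by
      have hzx : z ≠ x := fun h => hz (h ▸ hx)
      simpa [Function.update_apply, hzx] using η.2 z hz⟩
  else η

/-- `D^{bd2}`: configurations obtained from a configuration in `D` by adding one particle
of type 2 at a site of `∂⁻Λ`. -/
def bd2 (L : ℕ) (D : Set (Config L)) : Set (Config L) :=
  {η' | ∃ η ∈ D, ∃ x : Site, inBd L x ∧ η.1 x = 0 ∧ η' = setSite L η x 2}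

/-- Number of particles of type 2 in `(Λ⁻)⁻`. -/
def n2in (L : ℕ) (η : Config L) : ℕ := {x : Site | inLam2 L x ∧ η.1 x = 2}.ncard

/-- The manifold `V_{*,n}`. -/
def Vman (L : ℕ) (n : ℕ) : Set (Config L) := {η | n2in L η = n}

/-- The configurations of minimal energy in `V_{*,n}`. -/
def VmanMin (U Δ1 Δ2 : ℝ) (L : ℕ) (n : ℕ) : Set (Config L) :=
  {η | η ∈ Vman L n ∧ ∀ η' ∈ Vman L n, H U Δ1 Δ2 L η ≤ H U Δ1 Δ2 L η'}

/-- `g(A,B)`. -/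
def gset (U Δ1 Δ2 : ℝ) (L : ℕ) (A B : Set (Config L)) : Set (Config L) :=
  {η | η ∈ B ∧ ∃ ζ ∈ A, ∃ ω, IsPath L ω ζ η ∧ ∀ ξ ∈ ω,
    numType L η 2 ≤ numType L ξ 2 ∧ numType L ξ 2 ≤ numType L ζ 2 ∧
      H U Δ1 Δ2 L ξ < Gamma U Δ1 Δ2 L}

/-- `ḡ(A,B)`. -/
def gbar (U Δ1 Δ2 : ℝ) (L : ℕ) (A B : Set (Config L)) : Set (Config L) :=
  {η | η ∈ B ∧ ∃ ζ ∈ A, ∃ ω, IsPath L ω ζ η ∧ ∀ ξ ∈ ω,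
    numType L η 2 ≤ numType L ξ 2 ∧ numType L ξ 2 ≤ numType L ζ 2 ∧
      H U Δ1 Δ2 L ξ ≤ Gamma U Δ1 Δ2 L}

/-- `ℓ* = ⌈Δ₁/ε⌉` with `ε = 4U - Δ₁ - Δ₂`. -/
def lstar (U Δ1 Δ2 : ℝ) : ℕ := ⌈Δ1 / (4 * U - Δ1 - Δ2)⌉₊

/-- Adjacency of dual unit squares (of 2-tiles). -/
def dualAdj (x y : Site) : Prop := |x.1 - y.1| = 1 ∧ |x.2 - y.2| = 1

/-- The standard-coordinate positions of the particles of type 2 of an `a × b` rectangle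
of 2-tiles in dual coordinates, with corner tile centred at `c`. -/
def dualRect (c : Site) (a b : ℕ) : Set Site :=
  {x | ∃ i j : ℕ, i < a ∧ j < b ∧ x = (c.1 + (i : ℤ) + (j : ℤ), c.2 - (i : ℤ) + (j : ℤ))}

/-- The set of positions of particles of type 2. -/
def set2 (L : ℕ) (η : Config L) : Set Site := {x | η.1 x = 2}

/-- The tile support `[η]`: the union of the tiles of the particles of type 2. -/
def tileSupp (L : ℕ) (η : Config L) : Set Site :=
  {y | ∃ x : Site, η.1 x = 2 ∧ (y = x ∨ Adj x y)}

/-- Dual perimeter of a set of 2-tile positions (total boundary length of the union of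
the corresponding dual unit squares). -/
def dualPerim (S : Set Site) : ℤ :=
  4 * (S.ncard : ℤ) - ({q : Site × Site | q.1 ∈ S ∧ q.2 ∈ S ∧ dualAdj q.1 q.2}.ncard : ℤ)

/-- The circumscribing dual rectangle (side lengths `a`, `b`, corner tile at `c`). -/
def CircumRect (S : Set Site) (c : Site) (a b : ℕ) : Prop :=
  S ⊆ dualRect c a b ∧
    (∃ x ∈ S, x.1 - x.2 = c.1 - c.2) ∧
    (∃ x ∈ S, x.1 - x.2 = c.1 - c.2 + 2 * ((a : ℤ) - 1)) ∧
    (∃ x ∈ S, x.1 + x.2 = c.1 + c.2) ∧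
    (∃ x ∈ S, x.1 + x.2 = c.1 + c.2 + 2 * ((b : ℤ) - 1))

/-- Connectedness of a set of dual unit squares. -/
def DualConnected (S : Set Site) : Prop :=
  ∀ x ∈ S, ∀ y ∈ S, ∃ (n : ℕ) (f : ℕ → Site),
    f 0 = x ∧ f n = y ∧ (∀ k, k ≤ n → f k ∈ S) ∧ ∀ k, k < n → dualAdj (f k) (f (k + 1))

/-- A monotone polyomino with circumscribing rectangle of side lengths `a`, `b`:
its dual perimeter equals the perimeter `2(a+b)` of the circumscribing rectangle. -/
def MonotonePolyWith (S : Set Site) (a b : ℕ) : Prop :=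
  S.Nonempty ∧ DualConnected S ∧
    ∃ c : Site, CircumRect S c a b ∧ dualPerim S = 2 * ((a : ℤ) + (b : ℤ))

/-- `D_A`: 2-tiled configurations with `ℓ*(ℓ*-1)+1` particles of type 2 whose dual tile
support is an `ℓ* × (ℓ*-1)` rectangle plus a protuberance on one of its four sides. -/
def DA (U Δ1 Δ2 : ℝ) (L : ℕ) : Set (Config L) :=
  {η | Tiled L η ∧
    numType L η 2 = lstar U Δ1 Δ2 * (lstar U Δ1 Δ2 - 1) + 1 ∧
    ∃ (c p : Site) (a b : ℕ),
      ((a = lstar U Δ1 Δ2 ∧ b = lstar U Δ1 Δ2 - 1) ∨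
        (a = lstar U Δ1 Δ2 - 1 ∧ b = lstar U Δ1 Δ2)) ∧
      p ∉ dualRect c a b ∧ (∃ q ∈ dualRect c a b, dualAdj q p) ∧
      set2 L η = dualRect c a b ∪ {p}}

/-- `D_B`: 2-tiled configurations with `ℓ*(ℓ*-1)+1` particles of type 2 whose dual tile
support is a monotone polyomino with circumscribing rectangle of side lengths
`ℓ*,ℓ*` or `ℓ*+1,ℓ*-1`. -/
def DB (U Δ1 Δ2 : ℝ) (L : ℕ) : Set (Config L) :=
  {η | Tiled L η ∧
    numType L η 2 = lstar U Δ1 Δ2 * (lstar U Δ1 Δ2 - 1) + 1 ∧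
    (MonotonePolyWith (set2 L η) (lstar U Δ1 Δ2) (lstar U Δ1 Δ2) ∨
      MonotonePolyWith (set2 L η) (lstar U Δ1 Δ2 + 1) (lstar U Δ1 Δ2 - 1) ∨
      MonotonePolyWith (set2 L η) (lstar U Δ1 Δ2 - 1) (lstar U Δ1 Δ2 + 1))}

/-- `D_C`: 2-tiled configurations with `ℓ*(ℓ*-1)+1` particles of type 2 whose dual tile
support is a monotone polyomino whose circumscribing rectangle has perimeter `4ℓ*`. -/
def DC (U Δ1 Δ2 : ℝ) (L : ℕ) : Set (Config L) :=
  {η | Tiled L η ∧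
    numType L η 2 = lstar U Δ1 Δ2 * (lstar U Δ1 Δ2 - 1) + 1 ∧
    ∃ a b : ℕ, a + b = 2 * lstar U Δ1 Δ2 ∧ MonotonePolyWith (set2 L η) a b}

/-- Two configurations agree modulo a translation. -/
def TransEq (L : ℕ) (η η' : Config L) : Prop :=
  ∃ v : Site, ∀ x : Site, η'.1 x = η.1 (x.1 - v.1, x.2 - v.2)

/-- `N*`: the cardinality of the set of protocritical droplets modulo translations. -/
def Nstar (U Δ1 Δ2 : ℝ) (L : ℕ) : ℕ :=
  Nat.card (Quot fun a b : {η : Config L // η ∈ Pset U Δ1 Δ2 L} => TransEq L a.1 b.1)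

/-- A corner particle of type 1: a particle of type 1 with exactly one active bond. -/
def CornerP1 (L : ℕ) (η : Config L) (x : Site) : Prop :=
  η.1 x = 1 ∧ {y : Site | activeBond L η x y}.ncard = 1

/-- A standard configuration with `ℓ*(ℓ*-1)` particles of type 2: a 2-tiled configuration
whose dual tile support is an `ℓ* × (ℓ*-1)` rectangle. -/
def StdRectConfig (U Δ1 Δ2 : ℝ) (L : ℕ) (ρ : Config L) : Prop :=
  Tiled L ρ ∧ numType L ρ 2 = lstar U Δ1 Δ2 * (lstar U Δ1 Δ2 - 1) ∧
    ∃ c : Site, set2 L ρ = dualRect c (lstar U Δ1 Δ2) (lstar U Δ1 Δ2 - 1) ∨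
      set2 L ρ = dualRect c (lstar U Δ1 Δ2 - 1) (lstar U Δ1 Δ2)

/-- A bar of `l` dual squares at dual level `j = jlev`, at positions `i₀ ≤ i < i₀ + l`. -/
def dualBarJ (c : Site) (jlev : ℤ) (i0 l : ℕ) : Set Site :=
  {x | ∃ i : ℕ, i0 ≤ i ∧ i < i0 + l ∧ x = (c.1 + (i : ℤ) + jlev, c.2 - (i : ℤ) + jlev)}

/-- A bar of `l` dual squares at dual level `i = ilev`, at positions `j₀ ≤ j < j₀ + l`. -/
def dualBarI (c : Site) (ilev : ℤ) (j0 l : ℕ) : Set Site :=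
  {x | ∃ j : ℕ, j0 ≤ j ∧ j < j0 + l ∧ x = (c.1 + ilev + (j : ℤ), c.2 - ilev + (j : ℤ))}

/-- A standard polyomino: a quasi-square with possibly a bar attached to one of its
longest sides. -/
def StdPoly (S : Set Site) : Prop :=
  ∃ (c : Site) (a b : ℕ), 0 < a ∧ 0 < b ∧ (a = b ∨ a = b + 1 ∨ b = a + 1) ∧
    (S = dualRect c a b ∨
      ∃ k0 l : ℕ, 0 < l ∧
        ((b ≤ a ∧ k0 + l ≤ a ∧
            (S = dualRect c a b ∪ dualBarJ c (b : ℤ) k0 l ∨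
              S = dualRect c a b ∪ dualBarJ c (-1) k0 l)) ∨
          (a ≤ b ∧ k0 + l ≤ b ∧
            (S = dualRect c a b ∪ dualBarI c (a : ℤ) k0 l ∨
              S = dualRect c a b ∪ dualBarI c (-1) k0 l))))

/-- A standard configuration: a 2-tiled configuration whose dual tile support is a
standard polyomino. -/
def StdConfig (L : ℕ) (η : Config L) : Prop := Tiled L η ∧ StdPoly (set2 L η)

/-- A quasi-standard configuration: obtained from a standard configuration by removing
some (possibly none) of its corner particles of type 1. -/
def QuasiStd (L : ℕ) (η : Config L) : Prop :=
  ∃ ρ : Config L, StdConfig L ρ ∧ ∃ S : Set Site, (∀ x ∈ S, CornerP1 L ρ x) ∧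
    ∀ x : Site, (x ∈ S → η.1 x = 0) ∧ (x ∉ S → η.1 x = ρ.1 x)

/-- The surface `F(η)`. -/
def surface (L : ℕ) (η : Config L) : Set Site :=
  {x | inLam L x ∧ ∃ y, Adj x y ∧ η.1 y = 1}

/-- A good dual corner: an empty site with three neighbouring sites occupied by
particles of type 1. -/
def GoodDualCorner (L : ℕ) (η : Config L) (w : Site) : Prop :=
  η.1 w = 0 ∧ {y : Site | Adj w y ∧ η.1 y = 1}.ncard = 3

/-- Connectedness of two occupied sites through active bonds (same cluster). -/
def BondConn (L : ℕ) (η : Config L) (x y : Site) : Prop :=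
  ∃ (n : ℕ) (f : ℕ → Site), f 0 = x ∧ f n = y ∧ (∀ k, k ≤ n → η.1 (f k) ≠ 0) ∧
    ∀ k, k < n → activeBond L η (f k) (f (k + 1))

/-- A configuration consisting of a single droplet (one cluster). -/
def SingleDroplet (L : ℕ) (η : Config L) : Prop :=
  (∃ x, η.1 x ≠ 0) ∧ ∀ x y, η.1 x ≠ 0 → η.1 y ≠ 0 → BondConn L η x y

/-- The number of droplets (clusters) of a configuration. -/
def nDroplets (L : ℕ) (η : Config L) : ℕ :=
  Nat.card (Quot fun a b : {x : Site // η.1 x ≠ 0} => BondConn L η a.1 b.1)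

/-- A site with a lattice path of empty sites to `∂⁻Λ`. -/
def LatticeConnecting (L : ℕ) (η : Config L) (i : Site) : Prop :=
  ∃ (n : ℕ) (f : ℕ → Site), f 0 = i ∧ inBd L (f n) ∧
    (∀ k, k ≤ n → inLam L (f k)) ∧ (∀ k, k < n → Adj (f k) (f (k + 1))) ∧
    ∀ k, 0 < k → k ≤ n → η.1 (f k) = 0

/-- A path of empty sites of `Λ` for the free particle, starting in `∂⁻Λ`. -/
def FreePath (L : ℕ) (η₀ : Config L) (m : ℕ) (z : ℕ → Site) : Prop :=
  inBd L (z 0) ∧ (∀ k, k ≤ m → inLam L (z k) ∧ η₀.1 (z k) = 0) ∧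
    ∀ k, k < m → Adj (z k) (z (k + 1))

/-- The free particle of type 2 placed at `w` is attached to the droplet `η₀`
(it has at least one active bond). -/
def AttachedAt (L : ℕ) (η₀ : Config L) (w : Site) : Prop :=
  ∃ y, activeBond L (setSite L η₀ w 2) w y

/-- `C*_att(η₀)`: configurations obtained from `C_bd` by moving the free particle of
type 2 along a path of empty sites of `Λ` and attaching it to the droplet `η₀`. -/
def CstarAtt (U Δ1 Δ2 : ℝ) (L : ℕ) (η₀ : Config L) : Set (Config L) :=
  {η | ∃ (m : ℕ) (z : ℕ → Site), FreePath L η₀ m z ∧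
      setSite L η₀ (z 0) 2 ∈ Cbd U Δ1 Δ2 L ∧
      (∀ k, k < m → ¬ AttachedAt L η₀ (z k)) ∧ AttachedAt L η₀ (z m) ∧
      η = setSite L η₀ (z m) 2}

/-- `C*`: configurations obtained from `C_bd` by moving the free particle of type 2
along a path of empty sites of `Λ` without ever attaching it to the droplet. -/
def Cstar (U Δ1 Δ2 : ℝ) (L : ℕ) : Set (Config L) :=
  {η | ∃ η₀ ∈ Pset U Δ1 Δ2 L, ∃ (m : ℕ) (z : ℕ → Site), FreePath L η₀ m z ∧
      setSite L η₀ (z 0) 2 ∈ Cbd U Δ1 Δ2 L ∧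
      (∀ k, k ≤ m → ¬ AttachedAt L η₀ (z k)) ∧
      η = setSite L η₀ (z m) 2}

/-- Membership of an `m × m` square of sites with lower-left corner `c`. -/
def inSquare (c : Site) (m : ℕ) (x : Site) : Prop :=
  c.1 ≤ x.1 ∧ x.1 < c.1 + (m : ℤ) ∧ c.2 ≤ x.2 ∧ x.2 < c.2 + (m : ℤ)

/-- The move of a particle of type 2 from `x` to the neighbouring empty site `y`. -/
def Move2 (L : ℕ) (ξ ξ' : Config L) (x y : Site) : Prop :=
  Adj x y ∧ ξ.1 x = 2 ∧ ξ.1 y = 0 ∧ ξ'.1 x = 0 ∧ ξ'.1 y = 2 ∧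
    ∀ z, z ≠ x → z ≠ y → ξ'.1 z = ξ.1 z

/-- The step `ξ → ξ'` moves a corner particle of type 2 of `η` along the edge where in
`η` it shares a bond with a corner particle of type 1. -/
def CornerStep (L : ℕ) (η ξ ξ' : Config L) : Prop :=
  ∃ x y q : Site, Move2 L ξ ξ' x y ∧ η.1 x = 2 ∧ CornerP1 L η q ∧
    activeBond L η x q ∧
    (y.1 - x.1) * (q.1 - x.1) + (y.2 - x.2) * (q.2 - x.2) = 0

/-- `S(ω)`: the set of maximal-energy configurations of a path. -/
def argmaxSet (U Δ1 Δ2 : ℝ) (L : ℕ) (ω : List (Config L)) : Set (Config L) :=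
  {ξ | ξ ∈ ω ∧ H U Δ1 Δ2 L ξ = maxH U Δ1 Δ2 L ω}

/-- An unessential saddle. -/
def Unessential (U Δ1 Δ2 : ℝ) (L : ℕ) (ζ : Config L) : Prop :=
  ∀ ω, OptPath U Δ1 Δ2 L ω → ζ ∈ ω →
    (argmaxSet U Δ1 Δ2 L ω \ {ζ}).Nonempty ∧
    ∃ ω', OptPath U Δ1 Δ2 L ω' ∧
      argmaxSet U Δ1 Δ2 L ω' ⊆ argmaxSet U Δ1 Δ2 L ω \ {ζ}

/-! Coefficients of the generating functions of Kurz counting polyominoes of minimal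
perimeter: `a(x) = ∏_{j≥1} (1-x^j)^{-1}` (partitions), `s(x) = 1 + ∑_{k≥1} x^{k²}
∏_{j=1}^k (1-x^{2j})^{-1}`, `r(x) = (a(x)⁴ + 3a(x²)²)/4`,
`q(x) = (a(x)⁴ + 3a(x²)² + 2s(x)²a(x²) + 2a(x⁴))/8`. -/

/-- Coefficients of `a(x)`: the number of partitions of `n`. -/
def partCount (n : ℕ) : ℕ := Nat.card (Nat.Partition n)

/-- The number of partitions of `n` into parts of size at most `k`. -/
def partCountLe (k n : ℕ) : ℕ :=
  Nat.card {π : Nat.Partition n // ∀ i ∈ π.parts, i ≤ k}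

/-- Coefficients of `a(x)⁴`. -/
def aPow4Coeff (n : ℕ) : ℕ :=
  ∑ i ∈ Finset.range (n + 1), ∑ j ∈ Finset.range (n + 1 - i),
    ∑ k ∈ Finset.range (n + 1 - i - j),
      partCount i * partCount j * partCount k * partCount (n - i - j - k)

/-- Coefficients of `a(x²)`. -/
def aX2Coeff (n : ℕ) : ℕ := if 2 ∣ n then partCount (n / 2) else 0

/-- Coefficients of `a(x²)²`. -/
def aSqX2Coeff (n : ℕ) : ℕ :=
  if 2 ∣ n then ∑ i ∈ Finset.range (n / 2 + 1), partCount i * partCount (n / 2 - i) else 0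

/-- Coefficients of `a(x⁴)`. -/
def aX4Coeff (n : ℕ) : ℕ := if 4 ∣ n then partCount (n / 4) else 0

/-- Coefficients of `s(x)`: the coefficient of `xⁿ` in `x^{k²} ∏_{j=1}^k (1-x^{2j})^{-1}`
is the number of partitions of `(n-k²)/2` into parts at most `k` (when `n-k²` is even
and nonnegative). -/
def sCoeff (n : ℕ) : ℕ :=
  (if n = 0 then 1 else 0) +
    ∑ k ∈ Finset.Icc 1 n,
      if k ^ 2 ≤ n ∧ 2 ∣ (n - k ^ 2) then partCountLe k ((n - k ^ 2) / 2) else 0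

/-- Coefficients of `s(x)² a(x²)`. -/
def s2aCoeff (n : ℕ) : ℕ :=
  ∑ i ∈ Finset.range (n + 1), ∑ j ∈ Finset.range (n + 1 - i),
    sCoeff i * sCoeff j * aX2Coeff (n - i - j)

/-- `r_n`: the coefficients of `r(x) = (a(x)⁴ + 3a(x²)²)/4`. -/
def rCoeff (n : ℕ) : ℚ := ((aPow4Coeff n : ℚ) + 3 * (aSqX2Coeff n : ℚ)) / 4

/-- `q_n`: the coefficients of `q(x) = (a(x)⁴ + 3a(x²)² + 2s(x)²a(x²) + 2a(x⁴))/8`. -/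
def qCoeff (n : ℕ) : ℚ :=
  ((aPow4Coeff n : ℚ) + 3 * (aSqX2Coeff n : ℚ) + 2 * (s2aCoeff n : ℚ) +
    2 * (aX4Coeff n : ℚ)) / 8

/-!
Optimal paths can be spliced: if two optimal paths visit a common configuration, following the
first one up to it and the second one afterwards gives again an optimal path, since its maximal
energy is at most `Γ*` and, as it leads from `□` to `⊞`, at least `Γ*`.

`C_bd` is a gate because minimal gates exist (the configuration space is finite), so every optimal
path meets the essential gate, and its first configuration there lies in `C_bd`. For minimality,
take `ζ ∈ C_bd`, a minimal gate `W ∋ ζ` and an optimal path `τ` avoiding `W \ {ζ}`. The last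
configuration of `τ` in `C_bd` is `ζ`: otherwise, splicing a path that first enters the essential
gate there with the rest of `τ` would give an optimal path avoiding `W`. Splicing a path that first
enters the essential gate at `ζ` with the part of `τ` after `ζ` then gives an optimal path that
meets `C_bd` only at `ζ`, hence avoids every proper subset of `C_bd` not containing `ζ`.
-/

section FirstEntrance

variable {C : Type*}

theorem _root_.List.exists_eq_append_cons_first {l : List C} {p : C → Prop}
    (h : ∃ x ∈ l, p x) : ∃ s a t, l = s ++ a :: t ∧ p a ∧ ∀ x ∈ s, ¬ p x := by
  induction l with
  | nil => simp at h
  | cons y l ih =>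
    by_cases hy : p y
    · exact ⟨[], y, l, rfl, hy, by simp⟩
    · obtain ⟨s, a, t, rfl, hpa, hs⟩ := ih (by simpa [hy] using h)
      exact ⟨y :: s, a, t, rfl, hpa, by simpa [hy] using hs⟩

theorem _root_.List.exists_eq_append_cons_last {l : List C} {p : C → Prop}
    (h : ∃ x ∈ l, p x) : ∃ s a t, l = s ++ a :: t ∧ p a ∧ ∀ x ∈ t, ¬ p x := by
  obtain ⟨s, a, t, hl, hpa, hs⟩ :=
    List.exists_eq_append_cons_first (l := l.reverse) (by simpa using h)
  refine ⟨t.reverse, a, s.reverse, ?_, hpa, fun x hx => hs x (List.mem_reverse.1 hx)⟩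
  simpa using congrArg List.reverse hl

theorem firstIn_iff {ω : List C} {Y : Set C} {η : C} :
    FirstIn ω Y η ↔ ∃ s t, ω = s ++ η :: t ∧ η ∈ Y ∧ ∀ x ∈ s, x ∉ Y := by
  constructor
  · rintro ⟨i, hi, rfl, hY, hbefore⟩
    refine ⟨ω.take i, ω.drop (i + 1), by simp, hY, fun x hx => ?_⟩
    obtain ⟨⟨j, hj⟩, rfl⟩ := List.mem_iff_get.1 hx
    have hji : j < i := by rw [List.length_take] at hj; omega
    simpa using hbefore j hji
  · rintro ⟨s, t, rfl, hY, hs⟩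
    refine ⟨s.length, by simp, by simp, hY, fun j hj => ?_⟩
    simpa [List.getElem_append_left hj] using hs _ (List.getElem_mem hj)

theorem exists_firstIn {ω : List C} {Y : Set C} (h : ∃ x ∈ ω, x ∈ Y) :
    ∃ η ∈ ω, FirstIn ω Y η := by
  obtain ⟨s, η, t, rfl, hη, hs⟩ := List.exists_eq_append_cons_first h
  exact ⟨η, by simp, firstIn_iff.2 ⟨s, t, rfl, hη, hs⟩⟩

def SpliceClosed (P : List C → Prop) : Prop :=
  ∀ ⦃s t s' t' : List C⦄ ⦃x : C⦄, P (s ++ x :: t) → P (s' ++ x :: t') → P (s ++ x :: t')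

def firstEntrances (P : List C → Prop) (G : Set C) : Set C :=
  {η | ∃ ω, P ω ∧ FirstIn ω G η}

variable {P : List C → Prop} {G : Set C}

theorem firstEntrances_subset : firstEntrances P G ⊆ G := by
  rintro η ⟨ω, -, hη⟩
  obtain ⟨-, -, -, hG, -⟩ := firstIn_iff.1 hη
  exact hG

theorem exists_mem_firstEntrances (hG : ∀ ω, P ω → ∃ x ∈ G, x ∈ ω) {ω : List C} (hω : P ω) :
    ∃ x ∈ firstEntrances P G, x ∈ ω := by
  obtain ⟨x, hxG, hxω⟩ := hG ω hω
  obtain ⟨η, hηω, hη⟩ := exists_firstIn ⟨x, hxω, hxG⟩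
  exact ⟨η, ⟨ω, hω, hη⟩, hηω⟩

theorem SpliceClosed.exists_firstEntrances_eq (hP : SpliceClosed P) {W : Set C} (hWG : W ⊆ G)
    (hW : ∀ ω, P ω → ∃ x ∈ W, x ∈ ω) {ζ : C} (hζ : ζ ∈ firstEntrances P G)
    {τ : List C} (hτ : P τ) (hτW : ∀ x ∈ τ, x ∈ W → x = ζ) :
    ∃ ω, P ω ∧ ∀ x ∈ ω, x ∈ firstEntrances P G → x = ζ := by
  have hζτ : ζ ∈ τ := by
    obtain ⟨w, hwW, hwτ⟩ := hW τ hτ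
    exact hτW w hwτ hwW ▸ hwτ
  obtain ⟨s', ξ, t', rfl, hξ, ht'⟩ := List.exists_eq_append_cons_last ⟨ζ, hζτ, hζ⟩
  have hξζ : ξ = ζ := by
    obtain ⟨σ, hσ, hξσ⟩ := hξ
    obtain ⟨a, b, rfl, -, ha⟩ := firstIn_iff.1 hξσ
    obtain ⟨w, hwW, hw⟩ := hW _ (hP hσ hτ)
    simp only [List.mem_append, List.mem_cons] at hw
    rcases hw with hwa | rfl | hwt'
    · exact absurd (hWG hwW) (ha w hwa)
    · exact hτW w (by simp) hwW
    · exact absurd (hτW w (by simp [hwt']) hwW ▸ hζ) (ht' w hwt')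
  subst hξζ
  obtain ⟨ω, hω, hξω⟩ := hξ
  obtain ⟨s, t, rfl, -, hs⟩ := firstIn_iff.1 hξω
  refine ⟨s ++ ξ :: t', hP hω hτ, fun x hx hxF => ?_⟩
  simp only [List.mem_append, List.mem_cons] at hx
  rcases hx with hxs | rfl | hxt'
  · exact absurd (firstEntrances_subset hxF) (hs x hxs)
  · rfl
  · exact absurd hxF (ht' x hxt')

end FirstEntrance

theorem inLam_finite (L : ℕ) : {x : Site | inLam L x}.Finite := by
  refine ((Set.finite_Icc (-(L : ℤ) - 2) (L + 2)).prod
    (Set.finite_Icc (-(L : ℤ) - 2) (L + 2))).subset ?_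
  rintro ⟨a, b⟩ ⟨h1, h2, h3, h4⟩
  simp only [Set.mem_prod, Set.mem_Icc]
  omega

instance (L : ℕ) : Finite (Config L) := by
  have : Finite {x : Site // inLam L x} := (inLam_finite L).to_subtype
  refine Finite.of_injective (fun η : Config L => fun x : {x // inLam L x} => η.1 x) ?_
  intro η η' h
  refine Subtype.ext (funext fun x => ?_)
  by_cases hx : inLam L x
  · exact congrFun h ⟨x, hx⟩
  · rw [η.2 x hx, η'.2 x hx]

section OptimalPaths

variable {U Δ1 Δ2 : ℝ} {L : ℕ}

theorem IsPath.splice {s t s' t' : List (Config L)} {x a b a' b' : Config L}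
    (h : IsPath L (s ++ x :: t) a b) (h' : IsPath L (s' ++ x :: t') a' b') :
    IsPath L (s ++ x :: t') a b' := by
  obtain ⟨-, ha, -, hc⟩ := h
  obtain ⟨-, -, hb', hc'⟩ := h'
  refine ⟨by simp, by simpa [List.head?_append] using ha,
    by simpa [List.getLast?_append] using hb', ?_⟩
  rw [← List.singleton_append, ← List.append_assoc] at hc ⊢
  rw [← List.singleton_append] at hc'
  exact hc.left_of_append.append_overlap hc'.right_of_append (List.cons_ne_nil x [])

theorem maxH_le_iff {ω : List (Config L)} (hω : ω ≠ []) {c : ℝ} :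
    maxH U Δ1 Δ2 L ω ≤ c ↔ ∀ x ∈ ω, H U Δ1 Δ2 L x ≤ c := by
  rw [maxH, WithBot.unbotD_le_iff fun h => absurd (List.maximum_eq_bot.1 h) (by simpa using hω)]
  refine ⟨fun h x hx => ?_, fun h => List.maximum_le_of_forall_le ?_⟩
  · exact WithBot.coe_le_coe.1 ((List.le_maximum_of_mem' (List.mem_map_of_mem hx)).trans h)
  · simpa using h

theorem le_maxH {ω : List (Config L)} {x : Config L} (hx : x ∈ ω) :
    H U Δ1 Δ2 L x ≤ maxH U Δ1 Δ2 L ω :=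
  (maxH_le_iff (List.ne_nil_of_mem hx)).1 le_rfl x hx

theorem exists_mem_H_eq_maxH {ω : List (Config L)} (hω : ω ≠ []) :
    ∃ x ∈ ω, H U Δ1 Δ2 L x = maxH U Δ1 Δ2 L ω := by
  classical
  obtain ⟨x, hx, hmax⟩ := ω.toFinset.exists_max_image (H U Δ1 Δ2 L) (by simpa using hω)
  rw [List.mem_toFinset] at hx
  refine ⟨x, hx, le_antisymm (le_maxH hx) ((maxH_le_iff hω).2 fun y hy => ?_)⟩
  exact hmax y (List.mem_toFinset.2 hy)

theorem Gamma_le_maxH {b : Config L} (hb : b ∈ BoxPlus L) {ω : List (Config L)}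
    (hω : IsPath L ω (emptyConfig L) b) : Gamma U Δ1 Δ2 L ≤ maxH U Δ1 Δ2 L ω := by
  refine csInf_le ?_ ⟨emptyConfig L, rfl, b, hb, ω, hω, rfl⟩
  obtain ⟨c, hc⟩ := (Set.finite_range (H U Δ1 Δ2 L)).bddBelow
  refine ⟨c, ?_⟩
  rintro _ ⟨η, -, -, -, ρ, ⟨-, hη, -⟩, rfl⟩
  exact (hc ⟨η, rfl⟩).trans (le_maxH (List.mem_of_mem_head? hη))

theorem optPath_spliceClosed : SpliceClosed (OptPath U Δ1 Δ2 L) := by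
  rintro s t s' t' x ⟨_, -, hω, hωmax⟩ ⟨b, hb, hτ, hτmax⟩
  have hpath := hω.splice hτ
  refine ⟨b, hb, hpath, le_antisymm ?_ (Gamma_le_maxH hb hpath)⟩
  rw [maxH_le_iff hpath.1]
  intro y hy
  simp only [List.mem_append, List.mem_cons] at hy
  rcases hy with hy | rfl | hy
  · exact hωmax ▸ le_maxH (by simp [hy])
  · exact hωmax ▸ le_maxH (by simp)
  · exact hτmax ▸ le_maxH (by simp [hy])

theorem exists_isMinGate : ∃ W, IsMinGate U Δ1 Δ2 L W := by
  have hsaddles : IsGate U Δ1 Δ2 L {ζ | Saddle U Δ1 Δ2 L ζ} := by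
    refine ⟨fun ζ hζ => hζ, fun ω hω => ?_⟩
    have ⟨_, _, hpath, hmax⟩ := hω
    obtain ⟨ζ, hζω, hζ⟩ := exists_mem_H_eq_maxH (U := U) (Δ1 := Δ1) (Δ2 := Δ2) hpath.1
    exact ⟨ζ, ⟨hζ.trans hmax, ω, hω, hζω⟩, hζω⟩
  obtain ⟨W, -, hW⟩ := exists_minimal_le_of_wellFoundedLT (IsGate U Δ1 Δ2 L) _ hsaddles
  refine ⟨W, hW.1, fun W' hW' => ?_⟩
  by_contra! hmeets
  exact hW'.2 (hW.2 ⟨fun ζ hζ => hW.1.1 ζ (hW'.1 hζ), hmeets⟩ hW'.1)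

theorem isGate_essGate : IsGate U Δ1 Δ2 L (EssGate U Δ1 Δ2 L) := by
  refine ⟨fun ζ ⟨W, hW, hζW⟩ => hW.1.1 ζ hζW, fun ω hω => ?_⟩
  obtain ⟨W, hW⟩ := exists_isMinGate (U := U) (Δ1 := Δ1) (Δ2 := Δ2) (L := L)
  obtain ⟨ζ, hζW, hζω⟩ := hW.1.2 ω hω
  exact ⟨ζ, ⟨W, hW, hζW⟩, hζω⟩

theorem Cbd_eq_firstEntrances :
    Cbd U Δ1 Δ2 L = firstEntrances (OptPath U Δ1 Δ2 L) (EssGate U Δ1 Δ2 L) :=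
  rfl

end OptimalPaths

theorem Cbd_is_minimal_gate_general
    (U Δ1 Δ2 : ℝ) (L : ℕ) :
    IsMinGate U Δ1 Δ2 L (Cbd U Δ1 Δ2 L) := by
  have hG := isGate_essGate (U := U) (Δ1 := Δ1) (Δ2 := Δ2) (L := L)
  rw [Cbd_eq_firstEntrances]
  refine ⟨⟨fun ζ hζ => hG.1 ζ (firstEntrances_subset hζ),
    fun ω => exists_mem_firstEntrances hG.2⟩, fun W' hW' => ?_⟩
  obtain ⟨ζ, hζ, hζW'⟩ := Set.exists_of_ssubset hW'
  obtain ⟨W, hW, hζW⟩ := firstEntrances_subset hζ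
  obtain ⟨τ, hτ, hτW⟩ := hW.2 (W \ {ζ}) (Set.sdiff_singleton_ssubset.2 hζW)
  obtain ⟨ω, hω, hωζ⟩ := optPath_spliceClosed.exists_firstEntrances_eq
    (G := EssGate U Δ1 Δ2 L) (fun x hx => ⟨W, hW, hx⟩) hW.1.2 hζ hτ
    (fun x hxτ hxW => by_contra fun hxζ => hτW x ⟨hxW, hxζ⟩ hxτ)
  exact ⟨ω, hω, fun x hx hxω => hζW' (hωζ x hxω (hW'.1 hx) ▸ hx)⟩

/-- `C_bd` is a minimal gate for the transition `□ → ⊞`. -/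
theorem Cbd_is_minimal_gate
    (U Δ1 Δ2 : ℝ) (L : ℕ)
    (hU : 0 < U) (hΔ1 : 0 < Δ1) (hΔ2 : 0 < Δ2) :
    IsMinGate U Δ1 Δ2 L (Cbd U Δ1 Δ2 L) :=
  Cbd_is_minimal_gate_general U Δ1 Δ2 L

end TwoTypeKawasaki
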